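/- Let A ∈ ℝ^{n×n}, B ∈ ℝ^{n×k}, C ∈ ℝ^{m×n} with n − m < k, and let Z ∈ ℝ^{p×n} be a matrix with Z B = 0. Suppose Ker C ⊆ Im B and that for every v ∈ Ker C with v ≠ 0 one has Z A v ≠ 0. Then for every K ∈ ℝ^{k×n}, any subspace V with V ⊆ Ker C and (A+BK)V ⊆ V equals {0}; in particular the maximal (A,B)-invariant subspace contained in Ker C is {0}, i.e., dim 𝒱* = 0. -/
import Mathlib


open Matrix

/-- `Ker C = { x : Cx = 0 }` as a subspace of `ℝ^n`. -/
noncomputable def kerMat {m n : ℕ} (C : Matrix (Fin m) (Fin n) ℝ) :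
    Submodule ℝ (Fin n → ℝ) :=
  LinearMap.ker C.mulVecLin

/-- `Im B = { Bu : u ∈ ℝ^k }` as a subspace of `ℝ^n`. -/
noncomputable def imMat {n k : ℕ} (B : Matrix (Fin n) (Fin k) ℝ) :
    Submodule ℝ (Fin n → ℝ) :=
  LinearMap.range B.mulVecLin

/-- (Paper's Theorem 2, case `n − m < k`.) Let `Z` satisfy
`Z B = 0`. If `Ker C ⊆ Im B` and `Z A v ≠ 0` for every nonzero `v ∈ Ker C`, then for
every `K` the only subspace `V ⊆ Ker C` with `(A+BK)V ≤ V` is `{0}`; in particular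
the maximal (A,B)-invariant subspace contained in `Ker C` is `{0}`,
i.e. `dim 𝒱* = 0`. -/
theorem stmt18 (n k m p : ℕ) (A : Matrix (Fin n) (Fin n) ℝ)
    (B : Matrix (Fin n) (Fin k) ℝ) (C : Matrix (Fin m) (Fin n) ℝ)
    (Z : Matrix (Fin p) (Fin n) ℝ)
    (hdim : n - m < k)
    (hZ : Z * B = 0)
    (hKer : kerMat C ≤ imMat B)
    (hZA : ∀ v : Fin n → ℝ, v ∈ kerMat C → v ≠ 0 → Z *ᵥ (A *ᵥ v) ≠ 0) :
    (∀ (K : Matrix (Fin k) (Fin n) ℝ) (V : Submodule ℝ (Fin n → ℝ)),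
      V ≤ kerMat C → Submodule.map (A + B * K).mulVecLin V ≤ V → V = ⊥) ∧
    IsGreatest {V : Submodule ℝ (Fin n → ℝ) | V ≤ kerMat C ∧
        ∃ K : Matrix (Fin k) (Fin n) ℝ, Submodule.map (A + B * K).mulVecLin V ≤ V}
      (⊥ : Submodule ℝ (Fin n → ℝ)) := by
  -- For any w ∈ Ker C, Z w = 0, since w = B u and Z B = 0.
  have hZker : ∀ w : Fin n → ℝ, w ∈ kerMat C → Z *ᵥ w = 0 := by
    intro w hw
    obtain ⟨u, hu⟩ := hKer hw
    rw [← hu]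
    show Z *ᵥ (B *ᵥ u) = 0
    rw [mulVec_mulVec, hZ, zero_mulVec]
  have main : ∀ (K : Matrix (Fin k) (Fin n) ℝ) (V : Submodule ℝ (Fin n → ℝ)),
      V ≤ kerMat C → Submodule.map (A + B * K).mulVecLin V ≤ V → V = ⊥ := by
    intro K V hVC hinv
    rw [Submodule.eq_bot_iff]
    intro v hv
    by_contra hv0
    have hAv : (A + B * K) *ᵥ v ∈ V :=
      hinv ⟨v, hv, rfl⟩
    have h1 : Z *ᵥ ((A + B * K) *ᵥ v) = 0 := hZker _ (hVC hAv)
    have h2 : Z *ᵥ ((A + B * K) *ᵥ v) = Z *ᵥ (A *ᵥ v) := by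
      have h3 : Z *ᵥ (B * K) *ᵥ v = 0 := by
        rw [mulVec_mulVec, ← Matrix.mul_assoc, hZ, Matrix.zero_mul, zero_mulVec]
      rw [add_mulVec, mulVec_add, h3, add_zero]
    exact hZA v (hVC hv) hv0 (h2 ▸ h1)
  refine ⟨main, ⟨⟨bot_le, 0, ?_⟩, ?_⟩⟩
  · intro x hx
    obtain ⟨y, hy, rfl⟩ := hx
    simp_all [Submodule.mem_bot]
  · rintro V ⟨hVC, K, hinv⟩
    exact (main K V hVC hinv).le
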